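/- arXiv:1909.05837 — 3 statements merged into one kernel-verified Lean document; each statement's English description precedes it below -/
import Mathlib

section
/- Let f : {-1,1}^n → ℝ have Fourier expansion f(ε) = ∑_{S ⊆ [n]} a_S ∏_{k∈S} ε_k with all a_S ≥ 0. Define g : {-1,1}^n → ℝ by g(ε) = (1/2) ∑_{r=1}^n (f(ε) − f(ε with r-th coordinate flipped)). Then for any p ∈ ℕ and points X^(1),...,X^(p) ∈ {-1,1}^n, (1/p²) ∑_{i,j∈[p]} f(X^(i)·X^(j)) − 𝔼f ≤ (1/p²) ∑_{i,j∈[p]} g(X^(i)·X^(j)), where X^(i)·X^(j) denotes the coordinatewise product. -/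
/-!
Write χ_S(ε) = ∏_{k∈S} ε_k. Flipping ε_r changes the sign of χ_S exactly when r ∈ S, so on the
cube g = ∑_S |S| a_S χ_S. Since χ_S is multiplicative, χ_S(X^(i)·X^(j)) = χ_S(X^(i)) χ_S(X^(j)),
hence ∑_{i,j} f(X^(i)·X^(j)) = ∑_S a_S c_S² and ∑_{i,j} g(X^(i)·X^(j)) = ∑_S |S| a_S c_S² with
c_S = ∑_i χ_S(X^(i)). As c_∅ = p and a_S c_S² ≥ 0, the term S = ∅ accounts for p² 𝔼f and every
other term satisfies a_S c_S² ≤ |S| a_S c_S².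
-/

open Finset Function

section

variable {ι : Type*} [DecidableEq ι]

theorem prod_update_neg_self {R : Type*} [CommRing R] (ε : ι → R) (r : ι) (S : Finset ι) :
    ∏ k ∈ S, update ε r (-ε r) k = (if r ∈ S then -1 else 1) * ∏ k ∈ S, ε k := by
  split_ifs with hr
  · rw [prod_update_of_mem hr, sdiff_singleton_eq_erase, ← mul_prod_erase S ε hr]
    ring
  · rw [prod_update_of_notMem hr, one_mul]

theorem update_neg_self_mem_signs {ε : ι → ℝ} (hε : ∀ k, ε k = 1 ∨ ε k = -1) (r : ι) :
    ∀ k, update ε r (-ε r) k = 1 ∨ update ε r (-ε r) k = -1 := by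
  intro k
  rcases eq_or_ne k r with rfl | hk
  · rw [update_self]
    rcases hε k with h | h <;> simp [h]
  · rw [update_of_ne hk]
    exact hε k

theorem sum_sub_sum_update_neg_self [Fintype ι] {R : Type*} [CommRing R]
    (a : Finset ι → R) (ε : ι → R) :
    ∑ r, (∑ S, a S * ∏ k ∈ S, ε k - ∑ S, a S * ∏ k ∈ S, update ε r (-ε r) k)
      = 2 * ∑ S, (#S : R) * a S * ∏ k ∈ S, ε k := by
  have hterm : ∀ r S, a S * ∏ k ∈ S, ε k - a S * ∏ k ∈ S, update ε r (-ε r) k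
      = (if r ∈ S then 2 else 0) * (a S * ∏ k ∈ S, ε k) := by
    intro r S
    rw [prod_update_neg_self]
    split_ifs <;> ring
  simp_rw [← sum_sub_distrib, hterm]
  rw [sum_comm, mul_sum]
  refine sum_congr rfl fun S _ => ?_
  rw [← sum_mul, sum_ite_mem, univ_inter, sum_const, nsmul_eq_mul]
  ring

end

section

variable {ι κ R : Type*} [Fintype κ] [CommSemiring R]

theorem sum_sum_prod_mul_eq_sq (X : κ → ι → R) (S : Finset ι) :
    ∑ i, ∑ j, ∏ k ∈ S, X i k * X j k = (∑ i, ∏ k ∈ S, X i k) ^ 2 := by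
  simp_rw [prod_mul_distrib, sq, sum_mul_sum]

theorem sum_sum_sum_mul_prod_mul_eq_sum_mul_sq [Fintype ι] (b : Finset ι → R) (X : κ → ι → R) :
    ∑ i, ∑ j, ∑ S, b S * ∏ k ∈ S, X i k * X j k
      = ∑ S, b S * (∑ i, ∏ k ∈ S, X i k) ^ 2 := by
  simp_rw [← sum_sum_prod_mul_eq_sq, mul_sum]
  exact (sum_congr rfl fun _ _ => sum_comm).trans sum_comm

end

theorem sum_le_add_sum_card_mul {ι R : Type*} [Fintype ι] [CommSemiring R] [PartialOrder R]
    [IsOrderedRing R] (w : Finset ι → R) (hw : ∀ S, 0 ≤ w S) :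
    ∑ S, w S ≤ w ∅ + ∑ S, (#S : R) * w S := by
  classical
  calc ∑ S, w S ≤ ∑ S, ((if S = ∅ then w S else 0) + (#S : R) * w S) := by
        refine sum_le_sum fun S _ => ?_
        split_ifs with hS
        · simp [hS]
        · have : (1 : R) ≤ #S := by
            simpa using Nat.mono_cast (α := R) (card_pos.mpr (nonempty_iff_ne_empty.mpr hS))
          simpa using mul_le_mul_of_nonneg_right this (hw S)
    _ = w ∅ + ∑ S, (#S : R) * w S := by rw [sum_add_distrib, sum_ite_eq']; simp

theorem half_sum_sub_update_neg_self_eq {ι : Type*} [Fintype ι] [DecidableEq ι]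
    {f : (ι → ℝ) → ℝ} {a : Finset ι → ℝ}
    (hf : ∀ ε : ι → ℝ, (∀ k, ε k = 1 ∨ ε k = -1) → f ε = ∑ S, a S * ∏ k ∈ S, ε k)
    {ε : ι → ℝ} (hε : ∀ k, ε k = 1 ∨ ε k = -1) :
    (1 / 2) * ∑ r, (f ε - f (update ε r (-ε r))) = ∑ S, (#S : ℝ) * a S * ∏ k ∈ S, ε k := by
  have hexpand : ∀ r, f ε - f (update ε r (-ε r))
      = ∑ S, a S * ∏ k ∈ S, ε k - ∑ S, a S * ∏ k ∈ S, update ε r (-ε r) k := fun r => by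
    rw [hf ε hε, hf _ (update_neg_self_mem_signs hε r)]
  simp_rw [hexpand, sum_sub_sum_update_neg_self]
  ring

theorem stmt_1_general (n p : ℕ)
    (f g : (Fin n → ℝ) → ℝ) (a : Finset (Fin n) → ℝ)
    (ha : ∀ S, 0 ≤ a S)
    (hf : ∀ ε : Fin n → ℝ, (∀ k, ε k = 1 ∨ ε k = -1) →
      f ε = ∑ S : Finset (Fin n), a S * ∏ k ∈ S, ε k)
    (hg : ∀ ε : Fin n → ℝ, g ε = (1/2) * ∑ r : Fin n,
      (f ε - f (Function.update ε r (-(ε r)))))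
    (X : Fin p → Fin n → ℝ)
    (hX : ∀ i k, X i k = 1 ∨ X i k = -1) :
    (1 / (p : ℝ) ^ 2) * (∑ i : Fin p, ∑ j : Fin p, f (fun k => X i k * X j k)) - a ∅
      ≤ (1 / (p : ℝ) ^ 2) * ∑ i : Fin p, ∑ j : Fin p, g (fun k => X i k * X j k) := by
  have hXX : ∀ i j k, X i k * X j k = 1 ∨ X i k * X j k = -1 := fun i j k => by
    rcases hX i k with h | h <;> rcases hX j k with h' | h' <;> simp [h, h']
  set c : Finset (Fin n) → ℝ := fun S => ∑ i, ∏ k ∈ S, X i k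
  have hfX : ∑ i, ∑ j, f (fun k => X i k * X j k) = ∑ S, a S * c S ^ 2 := by
    rw [← sum_sum_sum_mul_prod_mul_eq_sum_mul_sq]
    exact sum_congr rfl fun i _ => sum_congr rfl fun j _ => hf _ (hXX i j)
  have hgX : ∑ i, ∑ j, g (fun k => X i k * X j k) = ∑ S, (#S : ℝ) * (a S * c S ^ 2) := by
    simp_rw [← mul_assoc]
    rw [← sum_sum_sum_mul_prod_mul_eq_sum_mul_sq]
    simp_rw [hg, half_sum_sub_update_neg_self_eq hf (hXX _ _)]
  have hc : c ∅ = p := by simp [c]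
  have hsum := sum_le_add_sum_card_mul (fun S => a S * c S ^ 2)
    fun S => mul_nonneg (ha S) (sq_nonneg _)
  -- an inequality rather than an equation, so that p = 0 (where 1 / 0 = 0) is covered
  have hconst : (1 / (p : ℝ) ^ 2) * (a ∅ * c ∅ ^ 2) ≤ a ∅ := by
    rw [hc, one_div, mul_left_comm]
    exact mul_le_of_le_one_right (ha ∅) (inv_mul_le_one_of_le₀ le_rfl (by positivity))
  rw [hfX, hgX]
  calc (1 / (p : ℝ) ^ 2) * ∑ S, a S * c S ^ 2 - a ∅
      ≤ (1 / (p : ℝ) ^ 2) * (∑ S, a S * c S ^ 2 - a ∅ * c ∅ ^ 2) := by rw [mul_sub]; linarith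
    _ ≤ (1 / (p : ℝ) ^ 2) * ∑ S, (#S : ℝ) * (a S * c S ^ 2) := by gcongr; linarith

theorem stmt_1 (n p : ℕ) (hp : 0 < p)
    (f g : (Fin n → ℝ) → ℝ) (a : Finset (Fin n) → ℝ)
    (ha : ∀ S, 0 ≤ a S)
    (hf : ∀ ε : Fin n → ℝ, (∀ k, ε k = 1 ∨ ε k = -1) →
      f ε = ∑ S : Finset (Fin n), a S * ∏ k ∈ S, ε k)
    (hg : ∀ ε : Fin n → ℝ, g ε = (1/2) * ∑ r : Fin n,
      (f ε - f (Function.update ε r (-(ε r)))))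
    (X : Fin p → Fin n → ℝ)
    (hX : ∀ i k, X i k = 1 ∨ X i k = -1) :
    (1 / (p : ℝ) ^ 2) * (∑ i : Fin p, ∑ j : Fin p, f (fun k => X i k * X j k)) - a ∅
      ≤ (1 / (p : ℝ) ^ 2) * ∑ i : Fin p, ∑ j : Fin p, g (fun k => X i k * X j k) :=
  stmt_1_general n p f g a ha hf hg X hX
end

section
/- Let f₁, f₂ : {-1,1}^n → ℂ have Fourier expansions f₁(ε) = ∑_S a_S ∏_{k∈S} ε_k and f₂(ε) = ∑_S b_S ∏_{k∈S} ε_k with b_S ∈ [0,∞) and |a_S| ≤ b_S for all S ⊆ [n]. Define g(ε) = (1/2) ∑_{r=1}^n (f₂(ε) − f₂(ε flipped at r)). Then for any p ∈ ℕ and any X^(1),...,X^(p) ∈ {-1,1}^n, |(1/p²) ∑_{i,j∈[p]} f₁(X^(i)·X^(j)) − 𝔼f₁| ≤ (1/p²) ∑_{i,j∈[p]} g(X^(i)·X^(j)), and the right side is a real number. -/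
/-!
Writing `χ_S(ε) = ∏_{k ∈ S} ε_k`, characters are multiplicative,
`χ_S(X⁽ⁱ⁾·X⁽ʲ⁾) = χ_S(X⁽ⁱ⁾) χ_S(X⁽ʲ⁾)`, so averaging any `f = ∑ c_S χ_S` over the pairs
`(X⁽ⁱ⁾, X⁽ʲ⁾)` gives `∑ c_S m_S²`, where `m_S = (1/p) ∑ᵢ χ_S(X⁽ⁱ⁾)` is real and `m_∅ = 1`.
Flipping coordinate `r` negates exactly the characters with `r ∈ S`, so `g = ∑ |S| b_S χ_S`.
The claim is then the triangle inequality `|∑_{S ≠ ∅} a_S m_S²| ≤ ∑_{S ≠ ∅} |S| b_S m_S²`.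
-/

open Finset

variable {ι κ R : Type*}

def IsSignVector [Ring R] (ε : ι → R) : Prop := ∀ k, ε k = 1 ∨ ε k = -1

theorem IsSignVector.mul [Ring R] {ε δ : ι → R} (hε : IsSignVector ε) (hδ : IsSignVector δ) :
    IsSignVector fun k => ε k * δ k := by
  intro k
  rcases hε k with h | h <;> rcases hδ k with h' | h' <;> simp [h, h']

theorem IsSignVector.update_neg [Ring R] [DecidableEq ι] {ε : ι → R} (hε : IsSignVector ε)
    (r : ι) : IsSignVector (Function.update ε r (-ε r)) := by
  intro k
  rcases eq_or_ne k r with rfl | hk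
  · rcases hε k with h | h <;> simp [h]
  · simpa [Function.update_of_ne hk] using hε k

theorem prod_sub_prod_update_neg [CommRing R] [DecidableEq ι] (ε : ι → R) (r : ι)
    (S : Finset ι) :
    ∏ k ∈ S, ε k - ∏ k ∈ S, Function.update ε r (-ε r) k
      = if r ∈ S then 2 * ∏ k ∈ S, ε k else 0 := by
  by_cases hr : r ∈ S
  · rw [if_pos hr, prod_update_of_mem hr, ← mul_prod_erase S ε hr, sdiff_singleton_eq_erase]
    ring
  · rw [if_neg hr, prod_update_of_notMem hr, sub_self]

theorem half_sum_sub_update_neg [Fintype ι] [Field R] [NeZero (2 : R)] [DecidableEq ι]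
    (b : Finset ι → R) (ε : ι → R) :
    1 / 2 * ∑ r, (∑ S, b S * ∏ k ∈ S, ε k - ∑ S, b S * ∏ k ∈ S, Function.update ε r (-ε r) k)
      = ∑ S, (#S * b S) * ∏ k ∈ S, ε k := by
  simp_rw [← sum_sub_distrib, ← mul_sub, prod_sub_prod_update_neg, mul_ite, mul_zero]
  rw [sum_comm, mul_sum]
  refine sum_congr rfl fun S _ => ?_
  rw [sum_ite_mem, univ_inter, sum_const, nsmul_eq_mul]
  field_simp

theorem sum_sum_sum_mul_prod_mul [Fintype ι] [Fintype κ] [CommSemiring R] (c : Finset ι → R)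
    (X : κ → ι → R) :
    ∑ i, ∑ j, ∑ S, c S * ∏ k ∈ S, (X i k * X j k) = ∑ S, c S * (∑ i, ∏ k ∈ S, X i k) ^ 2 := by
  simp_rw [prod_mul_distrib, sq, sum_mul_sum, mul_sum]
  exact (sum_congr rfl fun i _ => sum_comm).trans sum_comm

/-- `m_S²`, the squared empirical mean of `χ_S` over the sample `x`. -/
noncomputable def walshMeanSq [Fintype κ] (x : κ → ι → ℝ) (S : Finset ι) : ℝ :=
  ((∑ i, ∏ k ∈ S, x i k) / Fintype.card κ) ^ 2

theorem walshMeanSq_empty [Fintype κ] [Nonempty κ] (x : κ → ι → ℝ) : walshMeanSq x ∅ = 1 := by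
  simp [walshMeanSq, Fintype.card_ne_zero]

theorem inv_sq_mul_sum_sum_eq_sum_mul_walshMeanSq [Fintype ι] [Fintype κ]
    (F : (ι → ℂ) → ℂ) (c : Finset ι → ℂ)
    (hF : ∀ ε, IsSignVector ε → F ε = ∑ S, c S * ∏ k ∈ S, ε k)
    (x : κ → ι → ℝ) (hx : ∀ i, IsSignVector fun k => (x i k : ℂ)) :
    1 / (Fintype.card κ : ℂ) ^ 2 * ∑ i, ∑ j, F (fun k => x i k * x j k)
      = ∑ S, c S * walshMeanSq x S := by
  simp_rw [hF _ ((hx _).mul (hx _)), sum_sum_sum_mul_prod_mul, mul_sum, walshMeanSq]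
  push_cast
  exact sum_congr rfl fun S _ => by ring

theorem norm_sum_smul_sub_le [Fintype ι] {E : Type*} [SeminormedAddCommGroup E]
    [NormedSpace ℝ E]
    (a : Finset ι → E) (b w : Finset ι → ℝ) (hab : ∀ S, ‖a S‖ ≤ b S) (hw : ∀ S, 0 ≤ w S)
    (hw₀ : w ∅ = 1) :
    ‖∑ S, w S • a S - a ∅‖ ≤ ∑ S, #S * b S * w S := by
  classical
  rw [← add_sum_erase _ _ (mem_univ ∅), hw₀, one_smul, add_sub_cancel_left,
    ← sum_erase univ (a := ∅) (f := fun S : Finset ι => (#S : ℝ) * b S * w S) (by simp)]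
  refine (norm_sum_le _ _).trans (sum_le_sum fun S hS => ?_)
  have hcard : (1 : ℝ) ≤ #S := mod_cast card_pos.2 (nonempty_iff_ne_empty.2 (ne_of_mem_erase hS))
  calc ‖w S • a S‖ = w S * ‖a S‖ := by rw [norm_smul, Real.norm_of_nonneg (hw S)]
    _ ≤ w S * (#S * b S) := mul_le_mul_of_nonneg_left
        ((hab S).trans (le_mul_of_one_le_left ((norm_nonneg _).trans (hab S)) hcard)) (hw S)
    _ = #S * b S * w S := by ring

theorem stmt_7_general (n p : ℕ) (hp : 0 < p)
    (f₁ f₂ g : (Fin n → ℂ) → ℂ) (a : Finset (Fin n) → ℂ) (b : Finset (Fin n) → ℝ)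
    (hab : ∀ S, ‖a S‖ ≤ b S)
    (hf₁ : ∀ ε : Fin n → ℂ, (∀ k, ε k = 1 ∨ ε k = -1) →
      f₁ ε = ∑ S : Finset (Fin n), a S * ∏ k ∈ S, ε k)
    (hf₂ : ∀ ε : Fin n → ℂ, (∀ k, ε k = 1 ∨ ε k = -1) →
      f₂ ε = ∑ S : Finset (Fin n), (b S : ℂ) * ∏ k ∈ S, ε k)
    (hg : ∀ ε : Fin n → ℂ, g ε = (1/2) * ∑ r : Fin n,
      (f₂ ε - f₂ (Function.update ε r (-(ε r)))))
    (X : Fin p → Fin n → ℂ)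
    (hX : ∀ i k, X i k = 1 ∨ X i k = -1) :
    ‖(1/(p:ℂ)^2) * (∑ i : Fin p, ∑ j : Fin p,
        f₁ (fun k => X i k * X j k)) - a ∅‖
      ≤ ((1/(p:ℂ)^2) * ∑ i : Fin p, ∑ j : Fin p, g (fun k => X i k * X j k)).re ∧
    ((1/(p:ℂ)^2) * ∑ i : Fin p, ∑ j : Fin p, g (fun k => X i k * X j k)).im = 0 := by
  obtain ⟨x, rfl⟩ : ∃ x : Fin p → Fin n → ℝ, X = fun i k => (x i k : ℂ) :=
    ⟨fun i k => (X i k).re, funext₂ fun i k => by rcases hX i k with h | h <;> simp [h]⟩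
  have : Nonempty (Fin p) := ⟨⟨0, hp⟩⟩
  have hg_fourier (ε : Fin n → ℂ) (hε : IsSignVector ε) :
      g ε = ∑ S, (#S * b S : ℂ) * ∏ k ∈ S, ε k := by
    rw [hg, ← half_sum_sub_update_neg]
    simp_rw [hf₂ ε hε, hf₂ _ (hε.update_neg _)]
  have hf₁_avg := inv_sq_mul_sum_sum_eq_sum_mul_walshMeanSq f₁ a hf₁ x hX
  have hg_avg := inv_sq_mul_sum_sum_eq_sum_mul_walshMeanSq g _ hg_fourier x hX
  rw [Fintype.card_fin] at hf₁_avg hg_avg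
  have hg_real : ∑ S, (#S * b S : ℂ) * walshMeanSq x S
      = ((∑ S, #S * b S * walshMeanSq x S : ℝ) : ℂ) := by
    push_cast; rfl
  simp only [hf₁_avg, hg_avg, hg_real, Complex.ofReal_re, Complex.ofReal_im, and_true]
  simpa only [Complex.real_smul, mul_comm] using
    norm_sum_smul_sub_le a b (walshMeanSq x) hab (fun S => sq_nonneg _) (walshMeanSq_empty x)

theorem stmt_7 (n p : ℕ) (hp : 0 < p)
    (f₁ f₂ g : (Fin n → ℂ) → ℂ) (a : Finset (Fin n) → ℂ) (b : Finset (Fin n) → ℝ)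
    (hb : ∀ S, 0 ≤ b S) (hab : ∀ S, ‖a S‖ ≤ b S)
    (hf₁ : ∀ ε : Fin n → ℂ, (∀ k, ε k = 1 ∨ ε k = -1) →
      f₁ ε = ∑ S : Finset (Fin n), a S * ∏ k ∈ S, ε k)
    (hf₂ : ∀ ε : Fin n → ℂ, (∀ k, ε k = 1 ∨ ε k = -1) →
      f₂ ε = ∑ S : Finset (Fin n), (b S : ℂ) * ∏ k ∈ S, ε k)
    (hg : ∀ ε : Fin n → ℂ, g ε = (1/2) * ∑ r : Fin n,
      (f₂ ε - f₂ (Function.update ε r (-(ε r)))))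
    (X : Fin p → Fin n → ℂ)
    (hX : ∀ i k, X i k = 1 ∨ X i k = -1) :
    ‖(1/(p:ℂ)^2) * (∑ i : Fin p, ∑ j : Fin p,
        f₁ (fun k => X i k * X j k)) - a ∅‖
      ≤ ((1/(p:ℂ)^2) * ∑ i : Fin p, ∑ j : Fin p, g (fun k => X i k * X j k)).re ∧
    ((1/(p:ℂ)^2) * ∑ i : Fin p, ∑ j : Fin p, g (fun k => X i k * X j k)).im = 0 :=
  stmt_7_general n p hp f₁ f₂ g a b hab hf₁ hf₂ hg X hX
end

section
/- Let A be an n×n matrix with nonnegative real entries, D a diagonal n×n matrix with nonnegative diagonal entries, and λ, γ > 0. For ε ∈ {-1,1}^n let D_ε be the diagonal matrix with entries ε₁,...,εₙ. Suppose ((λ+γ)I + D) − (λ D_ε + A) is invertible for all ε and the Neumann series ∑_{m≥0} ((λ+γ)I+D)^{-1}[(λD_ε + A)((λ+γ)I+D)^{-1}]^m converges to its inverse. Then the function f(ε) = tr[((λ+γ)I + D − λD_ε − A)^{-1}] (tr = normalized trace) has a Fourier expansion f(ε) = ∑_{S⊆[n]} a_S ∏_{k∈S} ε_k with a_S ≥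 0 for all S. -/
/-! Expanding the Neumann series, each term `tr[B⁻¹((λD_ε + A)B⁻¹)^m]` (with `B = (λ+γ)I + D`)
is a polynomial in the signs `ε` with nonnegative coefficients, since `B⁻¹`, `A` and `λ` are
nonnegative. Such a polynomial `p` has nonnegative Fourier coefficients
`2⁻ⁿ ∑_ε (∏_{k∈S} ε_k) p(ε)`: multiplying by `∏_{k∈S} X_k` keeps the coefficients nonnegative, and
summing a monomial `ε^e` over the cube gives `∏_k ((-1)^{e_k} + 1) ≥ 0`. Fourier coefficients are
finite sums, so they pass to the limit of the series. -/

open MvPolynomial Matrix Finset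

namespace MvPolynomial

variable (σ R : Type*) [CommSemiring R] [PartialOrder R] [IsOrderedRing R]

def nonnegCoeffs : Subsemiring (MvPolynomial σ R) where
  carrier := {p | ∀ d, 0 ≤ p.coeff d}
  mul_mem' hp hq d := by
    classical
    rw [coeff_mul]; exact sum_nonneg fun x _ => mul_nonneg (hp _) (hq _)
  one_mem' d := by classical rw [coeff_one]; split_ifs <;> simp
  add_mem' hp hq d := by rw [coeff_add]; exact add_nonneg (hp d) (hq d)
  zero_mem' d := by simp

variable {σ R}

lemma C_mem_nonnegCoeffs {r : R} (hr : 0 ≤ r) : C r ∈ nonnegCoeffs σ R := fun d => by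
  classical rw [coeff_C]; split_ifs <;> simp [hr]

lemma X_mem_nonnegCoeffs (k : σ) : X k ∈ nonnegCoeffs σ R := fun d => by
  classical rw [coeff_X]; split_ifs <;> simp

end MvPolynomial

lemma Matrix.inv_diagonal_nonneg {ι K : Type*} [Fintype ι] [DecidableEq ι] [Field K]
    [LinearOrder K] [IsStrictOrderedRing K] {v : ι → K} (hv : ∀ k, 0 ≤ v k) (i j : ι) :
    0 ≤ (diagonal v)⁻¹ i j := by
  rw [inv_diagonal, diagonal_apply]
  split_ifs
  · unfold Ring.inverse
    split_ifs
    · simpa using hv i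
    · rfl
  · rfl

lemma exists_nonnegCoeffs_eval_eq_trace {ι : Type*} [Fintype ι] [DecidableEq ι]
    {P A : Matrix ι ι ℝ} (hP : ∀ i j, 0 ≤ P i j) (hA : ∀ i j, 0 ≤ A i j) {l c : ℝ}
    (hl : 0 ≤ l) (hc : 0 ≤ c) :
    ∃ q : ℕ → MvPolynomial ι ℝ, (∀ m, q m ∈ nonnegCoeffs ι ℝ) ∧
      ∀ ε m, eval ε (q m) = c * trace (P * ((l • diagonal ε + A) * P) ^ m) := by
  set Q : Matrix ι ι (MvPolynomial ι ℝ) := diagonal (fun k => C l * X k) + A.map C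
  have hP' : P.map C ∈ (nonnegCoeffs ι ℝ).matrix := fun i j => C_mem_nonnegCoeffs (hP i j)
  have hD : diagonal (fun k => C l * X k) ∈ (nonnegCoeffs ι ℝ).matrix :=
    (diagonal_mem_matrix_iff (zero_mem (nonnegCoeffs ι ℝ))).2 fun k =>
      mul_mem (C_mem_nonnegCoeffs hl) (X_mem_nonnegCoeffs k)
  have hQ : Q ∈ (nonnegCoeffs ι ℝ).matrix := add_mem hD fun i j => C_mem_nonnegCoeffs (hA i j)
  refine ⟨fun m => C c * trace (P.map C * (Q * P.map C) ^ m), fun m => ?_, fun ε m => ?_⟩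
  · have hM := mul_mem hP' (pow_mem (mul_mem hQ hP') m)
    exact mul_mem (C_mem_nonnegCoeffs hc) (sum_mem fun i _ => hM i i)
  · have hQε : (eval ε).mapMatrix Q = l • diagonal ε + A := by
      ext i j; by_cases h : i = j <;> simp [Q, h]
    have hPε : (eval ε).mapMatrix (P.map C) = P := by ext; simp
    rw [eval_mul, eval_C, AddMonoidHom.map_trace, ← RingHom.mapMatrix_apply, map_mul, map_pow,
      map_mul, hQε, hPε]

noncomputable section

namespace BooleanCube

variable {ι : Type*} [Fintype ι] [DecidableEq ι]

variable (ι) in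
def signs : Finset (ι → ℝ) := Fintype.piFinset fun _ => {-1, 1}

lemma mem_signs {ε : ι → ℝ} : ε ∈ signs ι ↔ ∀ k, ε k = 1 ∨ ε k = -1 := by
  simp [signs, Fintype.mem_piFinset, or_comm]

def fourierCoeff (f : (ι → ℝ) → ℝ) (S : Finset ι) : ℝ :=
  (2 ^ Fintype.card ι)⁻¹ * ∑ η ∈ signs ι, (∏ k ∈ S, η k) * f η

lemma sum_prod_mul_prod_eq_ite {η ε : ι → ℝ} (hη : η ∈ signs ι) (hε : ε ∈ signs ι) :
    ∑ S : Finset ι, (∏ k ∈ S, η k) * ∏ k ∈ S, ε k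
      = if η = ε then 2 ^ Fintype.card ι else 0 := by
  have hfactor : ∀ k, 1 + η k * ε k = if η k = ε k then 2 else 0 := fun k => by
    rcases mem_signs.1 hη k with h | h <;> rcases mem_signs.1 hε k with h' | h' <;>
      norm_num [h, h']
  calc ∑ S : Finset ι, (∏ k ∈ S, η k) * ∏ k ∈ S, ε k
    _ = ∏ k, (1 + η k * ε k) := by
        simp [prod_one_add, prod_mul_distrib]
    _ = if η = ε then 2 ^ Fintype.card ι else 0 := by
        simp [hfactor, prod_ite_zero, funext_iff]

theorem eq_sum_fourierCoeff_mul (f : (ι → ℝ) → ℝ) {ε : ι → ℝ} (hε : ε ∈ signs ι) :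
    f ε = ∑ S : Finset ι, fourierCoeff f S * ∏ k ∈ S, ε k := by
  have hswap : ∑ S : Finset ι, fourierCoeff f S * ∏ k ∈ S, ε k = (2 ^ Fintype.card ι)⁻¹ *
      ∑ η ∈ signs ι, f η * ∑ S : Finset ι, (∏ k ∈ S, η k) * ∏ k ∈ S, ε k := by
    simp only [fourierCoeff, mul_sum, sum_mul]
    rw [sum_comm]
    exact sum_congr rfl fun S _ => sum_congr rfl fun η _ => by ring
  rw [hswap, sum_congr rfl fun η hη => by rw [sum_prod_mul_prod_eq_ite hη hε]]
  simp [hε, mul_comm (f ε)]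

lemma sum_signs_monomial_nonneg (e : ι →₀ ℕ) : 0 ≤ ∑ η ∈ signs ι, ∏ k, η k ^ e k := by
  rw [signs, ← prod_univ_sum (fun _ => ({-1, 1} : Finset ℝ)) fun k s => s ^ e k]
  refine prod_nonneg fun k _ => ?_
  rw [sum_pair (by norm_num)]
  rcases neg_one_pow_eq_or ℝ (e k) with h | h <;> simp [h]

lemma sum_signs_eval_nonneg {p : MvPolynomial ι ℝ} (hp : p ∈ nonnegCoeffs ι ℝ) :
    0 ≤ ∑ η ∈ signs ι, eval η p := by
  simp_rw [eval_eq']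
  rw [sum_comm]
  exact sum_nonneg fun e _ => by
    rw [← mul_sum]
    exact mul_nonneg (hp e) (sum_signs_monomial_nonneg e)

theorem fourierCoeff_nonneg_of_hasSum {f : (ι → ℝ) → ℝ} {p : ℕ → MvPolynomial ι ℝ}
    (hp : ∀ m, p m ∈ nonnegCoeffs ι ℝ)
    (hf : ∀ η ∈ signs ι, HasSum (fun m => eval η (p m)) (f η)) (S : Finset ι) :
    0 ≤ fourierCoeff f S := by
  have hsum : HasSum (fun m => ∑ η ∈ signs ι, eval η ((∏ k ∈ S, X k) * p m))
      (∑ η ∈ signs ι, (∏ k ∈ S, η k) * f η) := by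
    refine hasSum_sum fun η hη => ?_
    simpa [eval_prod] using (hf η hη).mul_left (∏ k ∈ S, η k)
  refine mul_nonneg (by positivity) (hsum.nonneg fun m => sum_signs_eval_nonneg ?_)
  exact mul_mem (prod_mem fun k _ => X_mem_nonnegCoeffs k) (hp m)

end BooleanCube

end

theorem stmt_9_general (n : ℕ)
    (A : Matrix (Fin n) (Fin n) ℝ) (hA : ∀ i j, 0 ≤ A i j)
    (d : Fin n → ℝ) (hd : ∀ k, 0 ≤ d k) (l γ : ℝ) (hl : 0 < l) (hγ : 0 < γ)
    (hser : ∀ ε : Fin n → ℝ, (∀ k, ε k = 1 ∨ ε k = -1) →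
      HasSum (fun m : ℕ =>
        ((l+γ) • (1 : Matrix (Fin n) (Fin n) ℝ) + Matrix.diagonal d)⁻¹ *
          ((l • Matrix.diagonal ε + A) *
            ((l+γ) • (1 : Matrix (Fin n) (Fin n) ℝ) + Matrix.diagonal d)⁻¹) ^ m)
        (((l+γ) • (1 : Matrix (Fin n) (Fin n) ℝ) + Matrix.diagonal d
          - (l • Matrix.diagonal ε + A))⁻¹)) :
    ∃ a : Finset (Fin n) → ℝ, (∀ S, 0 ≤ a S) ∧
      ∀ ε : Fin n → ℝ, (∀ k, ε k = 1 ∨ ε k = -1) →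
        (1/(n:ℝ)) * Matrix.trace (((l+γ) • (1 : Matrix (Fin n) (Fin n) ℝ)
            + Matrix.diagonal d - (l • Matrix.diagonal ε + A))⁻¹)
          = ∑ S : Finset (Fin n), a S * ∏ k ∈ S, ε k := by
  set B : Matrix (Fin n) (Fin n) ℝ := (l + γ) • 1 + diagonal d with hB
  have hBinv : ∀ i j, 0 ≤ B⁻¹ i j := by
    rw [hB, smul_one_eq_diagonal, diagonal_add]
    exact inv_diagonal_nonneg fun k => by linarith [hd k]
  obtain ⟨q, hq, hq_eval⟩ :=
    exists_nonnegCoeffs_eval_eq_trace hBinv hA hl.le (c := 1 / n) (by positivity)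
  set f : (Fin n → ℝ) → ℝ := fun ε => 1 / n * trace ((B - (l • diagonal ε + A))⁻¹)
  refine ⟨BooleanCube.fourierCoeff f,
    BooleanCube.fourierCoeff_nonneg_of_hasSum hq fun η hη => ?_,
    fun ε hε => BooleanCube.eq_sum_fourierCoeff_mul f (BooleanCube.mem_signs.2 hε)⟩
  simp_rw [hq_eval]
  exact ((hser η (BooleanCube.mem_signs.1 hη)).map (traceLinearMap (Fin n) ℝ ℝ)
    (LinearMap.continuous_of_finiteDimensional _)).mul_left _

theorem stmt_9 (n : ℕ) (hn : 0 < n)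
    (A : Matrix (Fin n) (Fin n) ℝ) (hA : ∀ i j, 0 ≤ A i j)
    (d : Fin n → ℝ) (hd : ∀ k, 0 ≤ d k) (l γ : ℝ) (hl : 0 < l) (hγ : 0 < γ)
    (hinv : ∀ ε : Fin n → ℝ, (∀ k, ε k = 1 ∨ ε k = -1) →
      IsUnit ((l+γ) • (1 : Matrix (Fin n) (Fin n) ℝ) + Matrix.diagonal d
        - (l • Matrix.diagonal ε + A)))
    (hser : ∀ ε : Fin n → ℝ, (∀ k, ε k = 1 ∨ ε k = -1) →
      HasSum (fun m : ℕ =>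
        ((l+γ) • (1 : Matrix (Fin n) (Fin n) ℝ) + Matrix.diagonal d)⁻¹ *
          ((l • Matrix.diagonal ε + A) *
            ((l+γ) • (1 : Matrix (Fin n) (Fin n) ℝ) + Matrix.diagonal d)⁻¹) ^ m)
        (((l+γ) • (1 : Matrix (Fin n) (Fin n) ℝ) + Matrix.diagonal d
          - (l • Matrix.diagonal ε + A))⁻¹)) :
    ∃ a : Finset (Fin n) → ℝ, (∀ S, 0 ≤ a S) ∧
      ∀ ε : Fin n → ℝ, (∀ k, ε k = 1 ∨ ε k = -1) →
        (1/(n:ℝ)) * Matrix.trace (((l+γ) • (1 : Matrix (Fin n) (Fin n) ℝ)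
            + Matrix.diagonal d - (l • Matrix.diagonal ε + A))⁻¹)
          = ∑ S : Finset (Fin n), a S * ∏ k ∈ S, ε k :=
  stmt_9_general n A hA d hd l γ hl hγ hser
end
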